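/- Define H(a,b) = (2a)^{ab}·(1−ab)^{1−ab} / (1−b)^{a(1−b)} for a ∈ (0,1) and b ∈ (0,1) with ab < 1. If a > 1/2 and b ∈ (2 − 1/a, 1), then H(a,b) < H(a, 2 − 1/a) = 2·a^a·(1−a)^{1−a}; moreover H(a, 2 − 1/a) > 1 for a > 1/2. -/
import Mathlib

open Real Set

/-- `H(a,b) = (2a)^{ab}·(1−ab)^{1−ab}/(1−b)^{a(1−b)}` with real powers. -/
noncomputable def Hfun (a b : ℝ) : ℝ :=
  (2 * a) ^ (a * b) * (1 - a * b) ^ (1 - a * b) / (1 - b) ^ (a * (1 - b))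

lemma Hfun_exp' (a b : ℝ) (h1 : 0 < 2 * a) (h2 : 0 < 1 - a * b) (h3 : 0 < 1 - b) :
    (2 * a) ^ (a * b) * (1 - a * b) ^ (1 - a * b) / (1 - b) ^ (a * (1 - b)) =
      Real.exp (a * b * Real.log (2 * a) + (1 - a * b) * Real.log (1 - a * b)
      - a * ((1 - b) * Real.log (1 - b))) := by
  rw [Real.rpow_def_of_pos h1, Real.rpow_def_of_pos h2, Real.rpow_def_of_pos h3,
    ← Real.exp_add, ← Real.exp_sub]
  ring_nf

lemma f_deriv (a x : ℝ) (h2 : 1 - a * x ≠ 0) (h3 : 1 - x ≠ 0) :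
    HasDerivAt (fun x => a * x * Real.log (2 * a) + (1 - a * x) * Real.log (1 - a * x)
      - a * ((1 - x) * Real.log (1 - x)))
      (a * Real.log (2 * a) + (-a * Real.log (1 - a * x) - a)
        - a * (-Real.log (1 - x) - 1)) x := by
  have u : HasDerivAt (fun x : ℝ => 1 - a * x) (-a) x := by
    simpa using ((hasDerivAt_id x).const_mul a).const_sub 1
  have v : HasDerivAt (fun x : ℝ => 1 - x) (-1) x := by
    simpa using (hasDerivAt_id x).const_sub 1
  have t1 : HasDerivAt (fun x : ℝ => a * x * Real.log (2 * a)) (a * Real.log (2 * a)) x := by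
    simpa using ((hasDerivAt_id x).const_mul a).mul_const (Real.log (2 * a))
  have t2 := u.mul (u.log h2)
  have t3 := (v.mul (v.log h3)).const_mul a
  have e2 : -a * Real.log (1 - a * x) + (1 - a * x) * (-a / (1 - a * x))
      = -a * Real.log (1 - a * x) - a := by field_simp; ring
  have e3 : a * (-1 * Real.log (1 - x) + (1 - x) * (-1 / (1 - x)))
      = a * (-Real.log (1 - x) - 1) := by field_simp; ring
  rw [e2] at t2
  rw [e3] at t3
  exact (t1.add t2).sub t3


theorem Hfun_bounds (a b : ℝ) (ha1 : 1 / 2 < a) (ha2 : a < 1)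
    (hb1 : 2 - 1 / a < b) (hb2 : b < 1) :
    Hfun a b < Hfun a (2 - 1 / a) ∧
      Hfun a (2 - 1 / a) = 2 * a ^ a * (1 - a) ^ (1 - a) ∧
      1 < Hfun a (2 - 1 / a) := by
  have ha0 : 0 < a := by linarith
  have ha0' : a ≠ 0 := ne_of_gt ha0
  have h2a : 0 < 2 * a := by linarith
  have h1a : 0 < 1 - a := by linarith
  set b0 : ℝ := 2 - 1 / a with hb0def
  have hb00 : 0 < b0 := by
    have : 1 / a < 2 := by rw [div_lt_iff₀ ha0]; linarith
    rw [hb0def]; linarith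
  set f : ℝ → ℝ := fun x => a * x * Real.log (2 * a) + (1 - a * x) * Real.log (1 - a * x)
      - a * ((1 - x) * Real.log (1 - x)) with hfdef
  -- values at b0
  have hab0 : a * b0 = 2 * a - 1 := by rw [hb0def]; field_simp
  have h1ab0 : 1 - a * b0 = 2 - 2 * a := by rw [hab0]; ring
  have h1b0 : 1 - b0 = (1 - a) / a := by rw [hb0def]; field_simp; ring
  -- generic positivity on [b0, b]
  have hpos : ∀ x ∈ Icc b0 b, 0 < 1 - x ∧ 0 < 1 - a * x := by
    intro x hx
    have hx2 : x ≤ b := hx.2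
    constructor
    · linarith
    · nlinarith [hx.1, hx.2]
  -- Hfun = exp (f ·) for relevant points
  have hHf : ∀ x, 0 < 1 - x → 0 < 1 - a * x → Hfun a x = Real.exp (f x) := by
    intro x hx1 hx2
    exact Hfun_exp' a x h2a hx2 hx1
  -- strict antitonicity
  have hanti : StrictAntiOn f (Icc b0 b) := by
    apply strictAntiOn_of_deriv_neg (convex_Icc _ _)
    · apply ContinuousOn.sub (ContinuousOn.add (by fun_prop) ?_) ?_
      · apply ContinuousOn.mul (by fun_prop)
        apply ContinuousOn.log (by fun_prop)
        intro x hx; exact ne_of_gt (hpos x hx).2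
      · apply ContinuousOn.mul (by fun_prop)
        apply ContinuousOn.mul (by fun_prop)
        apply ContinuousOn.log (by fun_prop)
        intro x hx; exact ne_of_gt (hpos x hx).1
    · intro x hx
      rw [interior_Icc] at hx
      have hx1 : 0 < 1 - x := by linarith [hx.2, hb2]
      have hx2 : 0 < 1 - a * x := by nlinarith [hx.1, hx.2]
      rw [(f_deriv a x (ne_of_gt hx2) (ne_of_gt hx1)).deriv]
      have harg : 2 * a * (1 - x) < 1 - a * x := by
        have h' : a * b0 < a * x := mul_lt_mul_of_pos_left hx.1 ha0
        rw [hab0] at h'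
        nlinarith
      have hlog : Real.log (2 * a) + Real.log (1 - x) < Real.log (1 - a * x) := by
        rw [← Real.log_mul (ne_of_gt h2a) (ne_of_gt hx1)]
        exact Real.log_lt_log (by positivity) harg
      nlinarith [hlog, ha0]
  have hb0b : b0 < b := hb1
  have hfb : f b < f b0 := hanti (left_mem_Icc.2 hb0b.le) ⟨hb0b.le, le_refl b⟩ hb0b
  -- value at b0
  have hfb0 : f b0 = Real.log 2 + a * Real.log a + (1 - a) * Real.log (1 - a) := by
    simp only [hfdef]
    rw [hab0, h1b0, show (1:ℝ) - (2 * a - 1) = 2 * (1 - a) by ring]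
    have l1 : Real.log (2 * a) = Real.log 2 + Real.log a := Real.log_mul two_ne_zero ha0'
    have l2 : Real.log (2 * (1 - a)) = Real.log 2 + Real.log (1 - a) :=
      Real.log_mul two_ne_zero (ne_of_gt h1a)
    have l3 : Real.log ((1 - a) / a) = Real.log (1 - a) - Real.log a :=
      Real.log_div (ne_of_gt h1a) ha0'
    rw [l1, l2, l3]
    field_simp
    ring
  have hval : Hfun a b0 = 2 * a ^ a * (1 - a) ^ (1 - a) := by
    rw [hHf b0 (by rw [h1b0]; positivity) (by rw [h1ab0]; linarith), hfb0,
      Real.rpow_def_of_pos ha0, Real.rpow_def_of_pos h1a, Real.exp_add, Real.exp_add,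
      Real.exp_log (by norm_num : (0:ℝ) < 2)]
    ring_nf
  have hlt : Hfun a b < Hfun a b0 := by
    rw [hHf b (by linarith) (by nlinarith), hHf b0 (by rw [h1b0]; positivity)
      (by rw [h1ab0]; linarith)]
    exact Real.exp_lt_exp.2 hfb
  have hgt1 : 1 < Hfun a b0 := by
    rw [hHf b0 (by rw [h1b0]; positivity) (by rw [h1ab0]; linarith), hfb0]
    have hne : (1:ℝ)/a ≠ 1/(1-a) := by
      intro h
      have : a = 1 - a := by
        field_simp at h; linarith
      linarith
    have sc := strictConcaveOn_log_Ioi.2 (mem_Ioi.2 (by positivity : (0:ℝ) < 1/a))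
      (mem_Ioi.2 (by positivity : (0:ℝ) < 1/(1-a))) hne ha0 h1a (by ring)
    have e1 : a • (1/a) + (1-a) • (1/(1-a)) = (2:ℝ) := by
      simp only [smul_eq_mul]; field_simp; norm_num
    rw [e1, smul_eq_mul, smul_eq_mul, Real.log_div one_ne_zero ha0',
      Real.log_div one_ne_zero (ne_of_gt h1a), Real.log_one] at sc
    have hL : 0 < Real.log 2 + a * Real.log a + (1 - a) * Real.log (1 - a) := by linarith
    calc (1:ℝ) = Real.exp 0 := by simp
      _ < _ := Real.exp_lt_exp.2 hL
  exact ⟨hlt, hval, hgt1⟩
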